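/- Let a, b ∈ ℂ with |a| = |b| = 1, Im(a) > 0, Im(b) > 0, and let k ∈ (−1, 1). Suppose ya, yb ∈ ℂ satisfy |ya| = |yb| = 1, Im(ya) < 0, Im(yb) < 0, the three points a, k, ya are collinear, and the three points b, k, yb are collinear. Then ρ(a, b) = ρ( conj(ya), conj(yb) ). -/

import Mathlib

open Complex ComplexConjugate

/-- The inverse hyperbolic tangent. -/
noncomputable def artanh (x : ℝ) : ℝ := Real.log ((1 + x) / (1 - x)) / 2

/-- The hyperbolic metric of the upper half plane:
`ρ(a,b) = 2·artanh(|a − b| / |a − conj(b)|)`. -/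
noncomputable def rhoH (a b : ℂ) : ℝ :=
  2 * artanh (‖a - b‖ / ‖a - conj b‖)

/-!
With `m z = (k z - 1) / (z - k)`, a Möbius map with real coefficients and determinant
`1 - k² ≠ 0`, the theorem says `ρ(a, b) = ρ(m a, m b)`. Indeed `conj y = m a` whenever `a`, `k`, `y`
are collinear points with `a ≠ y` on the unit circle, because the chord through `a` and `y` is
`z + a y conj z = a + y`. A real Möbius map commutes with `conj` and satisfies
`m z - m w = det · (z - w) / ((γ z + δ)(γ w + δ))`; as `|γ w + δ| = |γ conj w + δ|`, the ratio
`|z - w| / |z - conj w|`, hence `ρ`, is invariant under it.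
-/
noncomputable def realMobius (α β γ δ : ℝ) (z : ℂ) : ℂ := (α * z + β) / (γ * z + δ)

section RealMobius

variable {α β γ δ : ℝ}

lemma conj_realMobius (z : ℂ) : conj (realMobius α β γ δ z) = realMobius α β γ δ (conj z) := by
  simp [realMobius, map_div₀]

lemma realMobius_sub_realMobius {z w : ℂ} (hz : γ * z + δ ≠ 0) (hw : γ * w + δ ≠ 0) :
    realMobius α β γ δ z - realMobius α β γ δ w
      = (α * δ - β * γ) * (z - w) / ((γ * z + δ) * (γ * w + δ)) := by
  rw [realMobius, realMobius, div_sub_div _ _ hz hw]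
  ring

lemma ofReal_mul_add_ofReal_ne_zero (hdet : α * δ - β * γ ≠ 0) {z : ℂ} (hz : z.im ≠ 0) :
    (γ : ℂ) * z + δ ≠ 0 := by
  intro h
  have hγ : γ = 0 := (mul_eq_zero.1 (by simpa using congrArg Complex.im h)).resolve_right hz
  have hδ : δ = 0 := by simpa [hγ] using congrArg Complex.re h
  simp [hγ, hδ] at hdet

lemma rhoH_realMobius (hdet : α * δ - β * γ ≠ 0) {z w : ℂ} (hz : z.im ≠ 0) (hw : w.im ≠ 0) :
    rhoH (realMobius α β γ δ z) (realMobius α β γ δ w) = rhoH z w := by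
  have hz' := ofReal_mul_add_ofReal_ne_zero hdet hz
  have hw' := ofReal_mul_add_ofReal_ne_zero hdet hw
  have hcw' := ofReal_mul_add_ofReal_ne_zero hdet (z := conj w) (by simpa using hw)
  have hnorm : ‖(γ : ℂ) * conj w + δ‖ = ‖(γ : ℂ) * w + δ‖ := by
    rw [← Complex.norm_conj]
    simp
  have hdet' : (α : ℂ) * δ - β * γ ≠ 0 := by exact_mod_cast hdet
  have := norm_pos_iff.2 hdet'
  have := norm_pos_iff.2 hz'
  have := norm_pos_iff.2 hw'
  rw [rhoH, rhoH, conj_realMobius, realMobius_sub_realMobius hz' hw',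
    realMobius_sub_realMobius hz' hcw']
  simp only [norm_div, norm_mul, hnorm]
  field_simp

end RealMobius

lemma add_mul_mul_conj_eq_of_mem_line {a y z : ℂ} (ha : ‖a‖ = 1) (hy : ‖y‖ = 1)
    (hz : z ∈ line[ℝ, a, y]) : z + a * y * conj z = a + y := by
  obtain ⟨t, rfl⟩ := mem_affineSpan_pair_iff_exists_lineMap_eq.1 hz
  have hca : a * conj a = 1 := by rw [Complex.mul_conj, Complex.normSq_eq_norm_sq, ha]; simp
  have hcy : y * conj y = 1 := by rw [Complex.mul_conj, Complex.normSq_eq_norm_sq, hy]; simp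
  simp only [AffineMap.lineMap_apply_module, Complex.real_smul, map_add, map_mul,
    Complex.conj_ofReal]
  push_cast
  linear_combination (1 - t) * y * hca + t * a * hcy

lemma conj_mul_sub_eq_of_collinear {a y : ℂ} {k : ℝ} (ha : ‖a‖ = 1) (hy : ‖y‖ = 1) (hay : a ≠ y)
    (hcol : Collinear ℝ ({a, (k : ℂ), y} : Set ℂ)) : conj y * (a - k) = k * a - 1 := by
  have hk := hcol.mem_affineSpan_of_mem_of_ne (p₃ := (k : ℂ)) (by simp) (by simp) (by simp) hay
  have hchord := add_mul_mul_conj_eq_of_mem_line ha hy hk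
  have hcy : y * conj y = 1 := by rw [Complex.mul_conj, Complex.normSq_eq_norm_sq, hy]; simp
  rw [Complex.conj_ofReal] at hchord
  linear_combination -conj y * hchord + (a * k - 1) * hcy

lemma conj_eq_realMobius_of_collinear {a y : ℂ} {k : ℝ} (ha : ‖a‖ = 1) (hy : ‖y‖ = 1)
    (hia : 0 < a.im) (hiy : y.im < 0) (hcol : Collinear ℝ ({a, (k : ℂ), y} : Set ℂ)) :
    conj y = realMobius k (-1) 1 (-k) a := by
  have hay : a ≠ y := fun h => by linarith [h ▸ hia]
  have hak : a - k ≠ 0 := sub_ne_zero.2 fun h => by simp [h] at hia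
  rw [realMobius, eq_div_iff (by simpa [sub_eq_add_neg] using hak)]
  push_cast
  linear_combination conj_mul_sub_eq_of_collinear ha hy hay hcol

theorem rhoH_reflection_invariance (a b : ℂ)
    (ha : ‖a‖ = 1) (hb : ‖b‖ = 1)
    (hia : 0 < a.im) (hib : 0 < b.im)
    (k : ℝ) (hk : -1 < k) (hk' : k < 1)
    (ya yb : ℂ) (hya : ‖ya‖ = 1) (hyb : ‖yb‖ = 1)
    (hiya : ya.im < 0) (hiyb : yb.im < 0)
    (hcol1 : Collinear ℝ ({a, (k : ℂ), ya} : Set ℂ))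
    (hcol2 : Collinear ℝ ({b, (k : ℂ), yb} : Set ℂ)) :
    rhoH a b = rhoH (conj ya) (conj yb) := by
  have hdet : k * -k - -1 * 1 ≠ 0 := by nlinarith
  rw [conj_eq_realMobius_of_collinear ha hya hia hiya hcol1,
    conj_eq_realMobius_of_collinear hb hyb hib hiyb hcol2,
    rhoH_realMobius hdet hia.ne' hib.ne']
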